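/- arXiv:1302.3426 — 3 statements merged into one kernel-verified Lean document; each statement's English description precedes it below -/
import Mathlib

section
/- Assume: (a) OBB_J(C̄, I) holds, where I is an ideal on S, otp(C_δ) = κ for every δ ∈ S, and C̄ is tree-like; (b) I is |i*|⁺-complete; (c) ⟨J_i : i < i*⟩ is a sequence of partial orders, each satisfying (∀s)(∃t)(s < t) and each κ-directed; (d) I* is an ideal on i* such that for every ⊆-increasing sequence ⟨U_ε : ε < κ⟩ of members of I*, the set i* ∖ ∪_{ε<κ} U_ε does not belong to I*; (e) J is a partial order and ḡ = ⟨g_t : t ∈ J⟩, with g_t ∈ ∏_{i<i*} J_i, is such that {g_t : t ∈ J} is cofinal in (∏_{i<i*} J_i, ≤_{I*}) and s ≤_J t implies g_s ≤_{I*} g_t. Then {i < i* : OBB_{J_i}(C̄, I)} ∈ I*⁺. -/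
open Set Cardinal

universe u v

/-- `I` is an ideal on the set `S` of ordinals: it contains the empty set, is closed under
subsets and finite unions, consists of subsets of `S`, and `S ∉ I`. -/
structure IsIdealOn (I : Set (Set Ordinal)) (S : Set Ordinal) : Prop where
  mem_subset : ∀ A ∈ I, A ⊆ S
  empty_mem : ∅ ∈ I
  mono : ∀ A ∈ I, ∀ B ⊆ A, B ∈ I
  union_mem : ∀ A ∈ I, ∀ B ∈ I, A ∪ B ∈ I
  base_not_mem : S ∉ I

/-- `I` is an ideal on the type `ι`. -/
structure IsIdeal {ι : Type u} (I : Set (Set ι)) : Prop where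
  empty_mem : ∅ ∈ I
  mono : ∀ A ∈ I, ∀ B ⊆ A, B ∈ I
  union_mem : ∀ A ∈ I, ∀ B ∈ I, A ∪ B ∈ I
  univ_not_mem : Set.univ ∉ I

/-- `I` is `μ`-complete: closed under unions of fewer than `μ` of its members. -/
def IdealComplete {α : Type u} (I : Set (Set α)) (μ : Cardinal.{u}) : Prop :=
  ∀ T : Set (Set α), T ⊆ I → #T < μ → ⋃₀ T ∈ I

/-- The order type of a set of ordinals. -/
noncomputable def otp (s : Set Ordinal.{0}) : Ordinal.{1} :=
  Ordinal.type (Subrel ((· < ·) : Ordinal → Ordinal → Prop) (· ∈ s))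

/-- `OBB_J(C̄, I)`: there is `t̄ = ⟨t_δ : δ ∈ S⟩` in `J` such that for every
`f : Dom(C̄) → J` the set `{δ ∈ S : ∀ α ∈ C_δ, f α ≤ t_δ}` is `I`-positive. -/
def OBB (J : Type u) [PartialOrder J] (S : Set Ordinal) (C : Ordinal → Set Ordinal)
    (I : Set (Set Ordinal)) : Prop :=
  ∃ t : Ordinal → J, ∀ f : Ordinal → J,
    {δ ∈ S | ∀ α ∈ C δ, f α ≤ t δ} ∉ I

/-- `OBB⁺_J(C̄, I)`: as `OBB` but the good set equals `S` mod `I`. -/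
def OBBplus (J : Type u) [PartialOrder J] (S : Set Ordinal) (C : Ordinal → Set Ordinal)
    (I : Set (Set Ordinal)) : Prop :=
  ∃ t : Ordinal → J, ∀ f : Ordinal → J,
    S \ {δ ∈ S | ∀ α ∈ C δ, f α ≤ t δ} ∈ I

/-- `C̄` is tree-like. -/
def TreeLike (S : Set Ordinal) (C : Ordinal → Set Ordinal) : Prop :=
  ∀ δ₁ ∈ S, ∀ δ₂ ∈ S, ∀ α, α ∈ C δ₁ → α ∈ C δ₂ → C δ₁ ∩ Set.Iio α = C δ₂ ∩ Set.Iio α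

/-- A partial order is `κ`-directed: every subset of cardinality `< κ` has an upper bound. -/
def KDirected (J : Type u) [PartialOrder J] (κ : Cardinal.{u}) : Prop :=
  ∀ s : Set J, #s < κ → ∃ ub : J, ∀ x ∈ s, x ≤ ub

/-- `f ≤_{I*} g` for elements of the product `∏_{i} Ji i`. -/
def prodLE {ι : Type 1} (Ji : ι → Type 1) [∀ i, PartialOrder (Ji i)]
    (Istar : Set (Set ι)) (f g : ∀ i, Ji i) : Prop :=
  {i | ¬ f i ≤ g i} ∈ Istar

/-- `f <_{I*} g` for elements of the product `∏_{i} Ji i`. -/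
def prodLT {ι : Type 1} (Ji : ι → Type 1) [∀ i, PartialOrder (Ji i)]
    (Istar : Set (Set ι)) (f g : ∀ i, Ji i) : Prop :=
  {i | ¬ f i < g i} ∈ Istar

/-- `E` is closed in `lam`. -/
def IsClosedIn (E : Set Ordinal) (lam : Ordinal) : Prop :=
  ∀ δ < lam, δ ≠ 0 → (∀ α < δ, ∃ β ∈ E, α < β ∧ β < δ) → δ ∈ E

/-- `E` is a club of `lam`. -/
def IsClubIn (E : Set Ordinal) (lam : Ordinal) : Prop :=
  (∀ β ∈ E, β < lam) ∧ (∀ α < lam, ∃ β ∈ E, α ≤ β) ∧ IsClosedIn E lam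

/-- `A` is stationary in `lam`. -/
def IsStationaryIn (A : Set Ordinal) (lam : Ordinal) : Prop :=
  ∀ E, IsClubIn E lam → (A ∩ E).Nonempty

/-!
Suppose the set `A` of `i` with `OBB_{J_i}(C̄, I)` were in `I*`, and let `t̄` witness
`OBB_J(C̄, I)`. For `i ∉ A` the colouring `δ ↦ g_{t_δ}(i)` fails, via some `f_i`, on a set `B_i ∈ I`.
Tree-likeness and `κ`-directedness give `F_α ∈ ∏ J_i` bounding `f_i(β)` for all `β ≤ α` on any
`C_δ ∋ α`, and `F_α ≤_{I*} g_{h(α)}` for some `h(α) ∈ J`. By `OBB_J` and `|i*|⁺`-completeness there is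
`δ ∉ ⋃_{i ∉ A} B_i` with `h ≤ t_δ` on `C_δ`, so every `F_α`, `α ∈ C_δ`, is `≤_{I*} g_{t_δ}`. The sets
`{i : f_i(β) ≰ g_{t_δ}(i) for some β ≤ α in C_δ}` then form a `κ`-chain in `I*`, and by (d) some
`i ∉ A` lies outside all of them, i.e. `δ ∈ B_i`: a contradiction.
-/

namespace IsIdeal

variable {ι : Type u} {I : Set (Set ι)}

theorem biUnion_mem (hI : IsIdeal I) {γ : Type v} {s : Set γ} (hs : s.Finite) {W : γ → Set ι}
    (hW : ∀ x ∈ s, W x ∈ I) : ⋃ x ∈ s, W x ∈ I := by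
  induction s, hs using Set.Finite.induction_on with
  | empty => simpa using hI.empty_mem
  | insert _ _ ih =>
    rw [biUnion_insert]
    exact hI.union_mem _ (hW _ (mem_insert _ _)) _ (ih fun x hx => hW x (mem_insert_of_mem _ hx))

theorem compl_not_mem (hI : IsIdeal I) {A : Set ι} (hA : A ∈ I) : Aᶜ ∉ I := fun hAc =>
  hI.univ_not_mem (by simpa using hI.union_mem _ hA _ hAc)

end IsIdeal

theorem IdealComplete.biUnion_mem {α ι : Type u} {I : Set (Set α)}
    (hI : IdealComplete I (Order.succ #ι)) (s : Set ι) {B : ι → Set α} (hB : ∀ i ∈ s, B i ∈ I) :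
    ⋃ i ∈ s, B i ∈ I := by
  rw [← sUnion_image]
  refine hI _ (image_subset_iff.mpr hB) ?_
  exact (mk_image_le.trans (mk_subtype_le _)).trans_lt (Order.lt_succ _)

theorem prodLE_trans {ι : Type 1} {Ji : ι → Type 1} [∀ i, PartialOrder (Ji i)]
    {Istar : Set (Set ι)} (hI : IsIdeal Istar) {f g h : ∀ i, Ji i}
    (hfg : prodLE Ji Istar f g) (hgh : prodLE Ji Istar g h) : prodLE Ji Istar f h :=
  hI.mono _ (hI.union_mem _ hfg _ hgh) _ fun _ hi =>
    not_and_or.mp fun hle => hi (hle.1.trans hle.2)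

section OrderType

variable {s : Set Ordinal.{0}} {κ : Cardinal.{1}}

theorem card_eq_of_otp_eq (hs : otp s = κ.ord) : #s = κ := by
  rw [← Ordinal.card_type (Subrel ((· < ·) : Ordinal → Ordinal → Prop) (· ∈ s))]
  exact (congrArg Ordinal.card hs).trans (card_ord κ)

theorem card_inter_Iio_lt_of_otp_eq (hs : otp s = κ.ord) {α : Ordinal} (hα : α ∈ s) :
    #(s ∩ Iio α : Set Ordinal) < κ := by
  let r := Subrel ((· < ·) : Ordinal → Ordinal → Prop) (· ∈ s)
  have e : (s ∩ Iio α : Set Ordinal) ≃ {b : s // r b ⟨α, hα⟩} :=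
    ⟨fun x => ⟨⟨x.1, x.2.1⟩, x.2.2⟩, fun y => ⟨y.1.1, y.1.2, y.2⟩, fun _ => rfl, fun _ => rfl⟩
  rw [mk_congr e, ← Ordinal.card_typein]
  exact lt_ord.mp (hs ▸ Ordinal.typein_lt_type r ⟨α, hα⟩)

/-- The chain hypothesis (d), read along the increasing enumeration of a set of order type `κ`. -/
theorem compl_biUnion_not_mem_of_chain {ι : Type 1} {I : Set (Set ι)} (hI : IsIdeal I)
    (hchain : ∀ U : Ordinal.{1} → Set ι, (∀ ε < κ.ord, U ε ∈ I) →
      (∀ ε₁ ε₂, ε₁ ≤ ε₂ → ε₂ < κ.ord → U ε₁ ⊆ U ε₂) → (⋃ ε ∈ Iio κ.ord, U ε)ᶜ ∉ I)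
    (hs : otp s = κ.ord) (Y : Ordinal → Set ι) (hY : ∀ α ∈ s, ⋃ β ∈ s ∩ Iic α, Y β ∈ I) :
    (⋃ α ∈ s, Y α)ᶜ ∉ I := by
  let r := Subrel ((· < ·) : Ordinal → Ordinal → Prop) (· ∈ s)
  let U : Ordinal.{1} → Set ι := fun ε => ⋃ (b : s) (_ : Ordinal.typein r b ≤ ε), Y b
  have hU : ∀ ε < κ.ord, U ε ∈ I := fun ε hε => by
    obtain ⟨a, rfl⟩ := Ordinal.typein_surj r (hs ▸ hε)
    refine hI.mono _ (hY a a.2) _ (iUnion₂_subset fun b hba => ?_)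
    exact subset_biUnion_of_mem ⟨b.2, not_lt.mp ((Ordinal.typein_le_typein r).mp hba)⟩
  have hUmono : ∀ ε₁ ε₂, ε₁ ≤ ε₂ → ε₂ < κ.ord → U ε₁ ⊆ U ε₂ := fun _ _ h12 _ =>
    iUnion₂_mono' fun b hb => ⟨b, hb.trans h12, subset_rfl⟩
  have hcover : ⋃ α ∈ s, Y α ⊆ ⋃ ε ∈ Iio κ.ord, U ε := fun i hi => by
    obtain ⟨α, hα, hi⟩ := mem_iUnion₂.mp hi
    exact mem_iUnion₂.mpr ⟨_, hs ▸ Ordinal.typein_lt_type r ⟨α, hα⟩,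
      mem_iUnion₂.mpr ⟨⟨α, hα⟩, le_rfl, hi⟩⟩
  exact fun hY' => hchain U hU hUmono (hI.mono _ hY' _ (compl_subset_compl.mpr hcover))

end OrderType

theorem TreeLike.inter_Iic_eq {S : Set Ordinal} {C : Ordinal → Set Ordinal} (htree : TreeLike S C)
    {δ₁ δ₂ α : Ordinal} (hδ₁ : δ₁ ∈ S) (hδ₂ : δ₂ ∈ S) (h₁ : α ∈ C δ₁) (h₂ : α ∈ C δ₂) :
    C δ₁ ∩ Iic α = C δ₂ ∩ Iic α := by
  rw [← Iio_insert, inter_insert_of_mem h₁, inter_insert_of_mem h₂, htree δ₁ hδ₁ δ₂ hδ₂ α h₁ h₂]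

theorem TreeLike.exists_bound {S : Set Ordinal.{0}} {C : Ordinal → Set Ordinal}
    {κ : Cardinal.{1}} (htree : TreeLike S C) (hotp : ∀ δ ∈ S, otp (C δ) = κ.ord) (hκ : ℵ₀ ≤ κ)
    {P : Type 1} [PartialOrder P] (hP : KDirected P κ) (f : Ordinal → P) :
    ∃ F : Ordinal → P, ∀ δ ∈ S, ∀ α ∈ C δ, ∀ β ∈ C δ ∩ Iic α, f β ≤ F α := by
  have hbound : ∀ α, ∃ u : P, ∀ δ ∈ S, α ∈ C δ → ∀ β ∈ C δ ∩ Iic α, f β ≤ u := fun α => by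
    by_cases hα : ∃ δ₀ ∈ S, α ∈ C δ₀
    · obtain ⟨δ₀, hδ₀S, hαδ₀⟩ := hα
      have hcard : #(f '' (C δ₀ ∩ Iic α)) < κ := by
        rw [← Iio_insert, inter_insert_of_mem hαδ₀]
        refine mk_image_le.trans_lt (mk_insert_le.trans_lt ?_)
        exact add_lt_of_lt hκ (card_inter_Iio_lt_of_otp_eq (hotp δ₀ hδ₀S) hαδ₀)
          (one_lt_aleph0.trans_le hκ)
      obtain ⟨u, hu⟩ := hP _ hcard
      refine ⟨u, fun δ hδS hαδ β hβ => hu _ (mem_image_of_mem f ?_)⟩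
      rwa [htree.inter_Iic_eq hδS hδ₀S hαδ hαδ₀] at hβ
    · exact ⟨f α, fun δ hδS hαδ => absurd ⟨δ, hδS, hαδ⟩ hα⟩
  choose F hF using hbound
  exact ⟨F, fun δ hδS α hα β hβ => hF α δ hδS hα β hβ⟩

/-- For `κ` finite, `C_δ` is finite and `F_α := f(α)` suffices; for `κ` infinite the bounds of
`TreeLike.exists_bound` turn hypothesis (d) into the conclusion. -/
theorem exists_bounds_forcing_positive {ι : Type 1} {Ji : ι → Type 1} [∀ i, PartialOrder (Ji i)]
    {S : Set Ordinal.{0}} {C : Ordinal → Set Ordinal} {Istar : Set (Set ι)} {κ : Cardinal.{1}}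
    (hIstar : IsIdeal Istar)
    (hchain : ∀ U : Ordinal.{1} → Set ι, (∀ ε < κ.ord, U ε ∈ Istar) →
      (∀ ε₁ ε₂, ε₁ ≤ ε₂ → ε₂ < κ.ord → U ε₁ ⊆ U ε₂) → (⋃ ε ∈ Iio κ.ord, U ε)ᶜ ∉ Istar)
    (htree : TreeLike S C) (hotp : ∀ δ ∈ S, otp (C δ) = κ.ord) (hdir : ∀ i, KDirected (Ji i) κ)
    (f : ∀ i, Ordinal → Ji i) :
    ∃ F : Ordinal → ∀ i, Ji i, ∀ δ ∈ S, ∀ u : ∀ i, Ji i,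
      (∀ α ∈ C δ, prodLE Ji Istar (F α) u) → {i | ∀ α ∈ C δ, f i α ≤ u i} ∉ Istar := by
  have hcompl : ∀ δ (u : ∀ i, Ji i),
      {i | ∀ α ∈ C δ, f i α ≤ u i} = (⋃ α ∈ C δ, {i | ¬ f i α ≤ u i})ᶜ := fun δ u => by
    ext i; simp
  rcases lt_or_ge κ ℵ₀ with hfin | hinf
  · refine ⟨fun α i => f i α, fun δ hδS u hu => hcompl δ u ▸ hIstar.compl_not_mem ?_⟩
    have : Finite (C δ) := mk_lt_aleph0_iff.mp (card_eq_of_otp_eq (hotp δ hδS) ▸ hfin)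
    exact hIstar.biUnion_mem (toFinite _) hu
  · choose F hF using fun i => htree.exists_bound hotp hinf (hdir i) (f i)
    refine ⟨fun α i => F i α, fun δ hδS u hu => hcompl δ u ▸ ?_⟩
    refine compl_biUnion_not_mem_of_chain hIstar hchain (hotp δ hδS) _ fun α hα => ?_
    refine hIstar.mono _ (hu α hα) _ (iUnion₂_subset fun β hβ i hi hle => hi ?_)
    exact (hF i δ hδS α hα β hβ).trans hle

theorem stmt4_general {ι : Type 1} {J : Type 1} [PartialOrder J]
    (Ji : ι → Type 1) [∀ i, PartialOrder (Ji i)]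
    (S : Set Ordinal) (C : Ordinal → Set Ordinal)
    (I : Set (Set Ordinal)) (Istar : Set (Set ι)) (κ : Cardinal.{1})
    -- (a)
    (hOBB : OBB J S C I) (hI : IsIdealOn I S)
    (hotp : ∀ δ ∈ S, otp (C δ) = κ.ord) (htree : TreeLike S C)
    -- (b) `I` is `|i*|⁺`-complete
    (hIcomp : IdealComplete I (Order.succ #ι))
    -- (c)
    (hJidir : ∀ i, KDirected (Ji i) κ)
    -- (d)
    (hIstar : IsIdeal Istar)
    (hIstarChain : ∀ U : Ordinal.{1} → Set ι,
      (∀ ε < κ.ord, U ε ∈ Istar) →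
      (∀ ε₁ ε₂, ε₁ ≤ ε₂ → ε₂ < κ.ord → U ε₁ ⊆ U ε₂) →
      (⋃ ε ∈ Set.Iio κ.ord, U ε)ᶜ ∉ Istar)
    -- (e)
    (g : J → ∀ i, Ji i)
    (hcof : ∀ f : ∀ i, Ji i, ∃ t : J, prodLE Ji Istar f (g t))
    (hmono : ∀ s t : J, s ≤ t → prodLE Ji Istar (g s) (g t)) :
    {i | OBB (Ji i) S C I} ∉ Istar := by
  set A := {i | OBB (Ji i) S C I}
  intro hA
  obtain ⟨t, ht⟩ := hOBB
  have hbad : ∀ i, ∃ fi : Ordinal → Ji i,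
      i ∉ A → {δ ∈ S | ∀ α ∈ C δ, fi α ≤ g (t δ) i} ∈ I := fun i => by
    by_cases hi : i ∈ A
    · exact ⟨fun α => g (t α) i, absurd hi⟩
    · simp only [A, mem_ofPred_eq, OBB, not_exists, not_forall, not_not] at hi
      obtain ⟨fi, hfi⟩ := hi fun δ => g (t δ) i
      exact ⟨fi, fun _ => hfi⟩
  choose f hf using hbad
  obtain ⟨F, hF⟩ := exists_bounds_forcing_positive hIstar hIstarChain htree hotp hJidir f
  choose h hh using fun α => hcof (F α)
  obtain ⟨δ, ⟨hδS, hδh⟩, hδB⟩ : ∃ δ ∈ {δ ∈ S | ∀ α ∈ C δ, h α ≤ t δ},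
      δ ∉ ⋃ i ∈ Aᶜ, {δ ∈ S | ∀ α ∈ C δ, f i α ≤ g (t δ) i} :=
    not_subset.mp fun hsub => ht h (hI.mono _ (hIcomp.biUnion_mem Aᶜ hf) _ hsub)
  have hFle : ∀ α ∈ C δ, prodLE Ji Istar (F α) (g (t δ)) := fun α hα =>
    prodLE_trans hIstar (hh α) (hmono _ _ (hδh α hα))
  obtain ⟨i, hi, hiA⟩ := not_subset.mp fun hsub =>
    hF δ hδS (g (t δ)) hFle (hIstar.mono _ hA _ hsub)
  exact hδB (mem_biUnion hiA ⟨hδS, hi⟩)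

/-- Pos (B) of the main lemma. Under (a)–(c) with `C̄` tree-like of
order type `κ` and each `J_i` `κ`-directed, and (d): `I*` an ideal on `i*` such that the
complement of the union of any `⊆`-increasing `κ`-sequence of members of `I*` is
`I*`-positive, and (e), the set `{i < i* : OBB_{J_i}(C̄, I)}` is `I*`-positive. -/
theorem stmt4 {ι : Type 1} {J : Type 1} [PartialOrder J]
    (Ji : ι → Type 1) [∀ i, PartialOrder (Ji i)]
    (S : Set Ordinal) (C : Ordinal → Set Ordinal)
    (I : Set (Set Ordinal)) (Istar : Set (Set ι)) (κ : Cardinal.{1})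
    -- (a)
    (hOBB : OBB J S C I) (hI : IsIdealOn I S) (hC : ∀ δ ∈ S, C δ ⊆ Set.Iio δ)
    (hotp : ∀ δ ∈ S, otp (C δ) = κ.ord) (htree : TreeLike S C)
    -- (b) `I` is `|i*|⁺`-complete
    (hIcomp : IdealComplete I (Order.succ #ι))
    -- (c)
    (hJi : ∀ i, ∀ s : Ji i, ∃ t : Ji i, s < t)
    (hJidir : ∀ i, KDirected (Ji i) κ)
    -- (d)
    (hIstar : IsIdeal Istar)
    (hIstarChain : ∀ U : Ordinal.{1} → Set ι,
      (∀ ε < κ.ord, U ε ∈ Istar) →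
      (∀ ε₁ ε₂, ε₁ ≤ ε₂ → ε₂ < κ.ord → U ε₁ ⊆ U ε₂) →
      (⋃ ε ∈ Set.Iio κ.ord, U ε)ᶜ ∉ Istar)
    -- (e)
    (g : J → ∀ i, Ji i)
    (hcof : ∀ f : ∀ i, Ji i, ∃ t : J, prodLE Ji Istar f (g t))
    (hmono : ∀ s t : J, s ≤ t → prodLE Ji Istar (g s) (g t)) :
    {i | OBB (Ji i) S C I} ∉ Istar :=
  stmt4_general Ji S C I Istar κ hOBB hI hotp htree hIcomp hJidir hIstar hIstarChain g hcof hmono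
end

section
/- Assume: (a) OBB⁺_J(C̄, I) holds and κ is a regular cardinal with |C_δ| < κ for every δ ∈ S; (b) I is a (2^{|i*|})⁺-complete ideal on S; (c) ⟨J_i : i < i*⟩ is a sequence of partial orders, each satisfying (∀s)(∃t)(s < t); (d) I* is a κ-complete ideal on i*; (e) J is a partial order, ḡ = ⟨g_t : t ∈ J⟩ with g_t ∈ ∏_{i<i*} J_i, and s <_J t implies g_s <_{I*} g_t; (f) whenever ε* < κ and g^ε ∈ ∏_{i<i*} J_i for ε < ε*, there is A ∈ I*⁺ such that for each ε < ε* there is t ∈ J with {i ∈ A : ¬(g^ε(i) <_{J_i} g_t(i))} ∈ I*. Then {i < i* : OBB_{J_i}(C̄, I)} ∈ I*⁺. -/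
open Set Cardinal

universe u v

/-!
Let `t̄` witness `OBB⁺_J` and suppose `B = {i | OBB_{J_i}}` were `I*`-small. For `i ∉ B` the
projection `δ ↦ g_{t_δ}(i)` fails, say by `F_i`. For each `δ`, condition (f) applied to the
`< κ` functions `⟨F_i(α) : i⟩`, `α ∈ C_δ`, yields an `I*`-positive `A_δ` on which each of them is
almost dominated by some `g_t`. By `(2^{|i*|})⁺`-completeness of `I`, `A_δ = X` on an `I`-positive
set of `δ`; gluing the dominating `t`'s into one `f : Dom(C̄) → J` and applying `OBB⁺` gives an
`I`-positive set of such `δ` with `f(α) ≤ t_δ` for `α ∈ C_δ`. For each of them, `κ`-completeness of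
`I*` and the monotonicity of `ḡ` provide some `i ∈ X ∖ B` with `F_i(α) ≤ g_{t_δ}(i)` for all
`α ∈ C_δ`, so this positive set is covered by the `|i*|` many `I`-small failure sets of the `F_i`.
-/

theorem IsIdeal.diff_notMem {ι : Type*} {I : Set (Set ι)} (hI : IsIdeal I) {A U : Set ι}
    (hA : A ∉ I) (hU : U ∈ I) : A \ U ∉ I :=
  fun h => hA (hI.mono _ (hI.union_mem _ h _ hU) _ (Set.subset_sdiff_union A U))

theorem IsIdeal.nonempty_of_notMem {ι : Type*} {I : Set (Set ι)} (hI : IsIdeal I) {A : Set ι}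
    (hA : A ∉ I) : A.Nonempty :=
  Set.nonempty_iff_ne_empty.2 fun h => hA (h ▸ hI.empty_mem)

theorem IsIdealOn.diff_notMem {I : Set (Set Ordinal)} {S : Set Ordinal} (hI : IsIdealOn I S)
    {A U : Set Ordinal} (hA : A ∉ I) (hU : U ∈ I) : A \ U ∉ I :=
  fun h => hA (hI.mono _ (hI.union_mem _ h _ hU) _ (Set.subset_sdiff_union A U))

theorem not_OBB_iff {J : Type*} [PartialOrder J] {S : Set Ordinal} {C : Ordinal → Set Ordinal}
    {I : Set (Set Ordinal)} :
    ¬ OBB J S C I ↔ ∀ t : Ordinal → J, ∃ f : Ordinal → J, {δ ∈ S | ∀ α ∈ C δ, f α ≤ t δ} ∈ I := by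
  simp [OBB]

theorem IdealComplete.biUnion_mem_s8 {α β : Type u} {I : Set (Set α)} {μ : Cardinal.{u}}
    (hI : IdealComplete I μ) {s : Set β} {f : β → Set α} (hf : ∀ b ∈ s, f b ∈ I)
    (hs : #s < μ) : ⋃ b ∈ s, f b ∈ I := by
  rw [← Set.sUnion_image]
  exact hI _ (Set.image_subset_iff.2 hf) (Cardinal.mk_image_le.trans_lt hs)

theorem IsIdealOn.exists_fiber_notMem {I : Set (Set Ordinal)} {S : Set Ordinal}
    (hI : IsIdealOn I S) {β : Type 1} {μ : Cardinal.{1}} (hμ : IdealComplete I μ) (hβ : #β < μ)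
    (f : Ordinal → β) : ∃ b, {δ ∈ S | f δ = b} ∉ I := by
  by_contra! h
  refine hI.base_not_mem (hI.mono _ (hμ.biUnion_mem_s8 (fun b _ => h b) (by rwa [Cardinal.mk_univ]))
    _ fun δ hδ => ?_)
  exact Set.mem_biUnion (Set.mem_univ (f δ)) ⟨hδ, rfl⟩

theorem IdealComplete.exists_mem_forall {α β : Type u} {I : Set (Set α)} {μ : Cardinal.{u}}
    (hμ : IdealComplete I μ) (hI : IsIdeal I) {X : Set α} (hX : X ∉ I) {s : Set β} (hs : #s < μ)
    {P : β → α → Prop} (hP : ∀ b ∈ s, {a | a ∈ X ∧ ¬ P b a} ∈ I) :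
    ∃ a ∈ X, ∀ b ∈ s, P b a := by
  obtain ⟨a, haX, haU⟩ := hI.nonempty_of_notMem (hI.diff_notMem hX (hμ.biUnion_mem_s8 hP hs))
  exact ⟨a, haX, fun b hb => by_contra fun h => haU (Set.mem_biUnion hb ⟨haX, h⟩)⟩

theorem prodLE_of_le {ι J : Type 1} [PartialOrder J] {Ji : ι → Type 1}
    [∀ i, PartialOrder (Ji i)] {Istar : Set (Set ι)} (hI : IsIdeal Istar) {g : J → ∀ i, Ji i}
    (hmono : ∀ s t : J, s < t → prodLT Ji Istar (g s) (g t)) {s t : J} (hst : s ≤ t) :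
    prodLE Ji Istar (g s) (g t) := by
  rcases hst.lt_or_eq with hlt | rfl
  · exact hI.mono _ (hmono s t hlt) _ fun i hi hlt => hi hlt.le
  · simpa [prodLE] using hI.empty_mem

/-- Condition (f), with the `< κ` functions indexed by an arbitrary small type instead of an
ordinal `< κ.ord`. -/
theorem exists_notMem_forall_exists_lt {ι J : Type*} [Nonempty J] {Ji : ι → Type*}
    [∀ i, LT (Ji i)] {Istar : Set (Set ι)} {κ : Cardinal.{1}} {g : J → ∀ i, Ji i}
    (hbound : ∀ es < κ.ord, ∀ gs : Ordinal.{1} → ∀ i, Ji i,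
      ∃ A : Set ι, A ∉ Istar ∧ ∀ ε < es, ∃ t : J, {i | i ∈ A ∧ ¬ gs ε i < g t i} ∈ Istar)
    {α : Type 1} (hα : #α < κ) (h : α → ∀ i, Ji i) :
    ∃ A : Set ι, A ∉ Istar ∧ ∀ a, ∃ t : J, {i | i ∈ A ∧ ¬ h a i < g t i} ∈ Istar := by
  obtain ⟨r, _, hr⟩ := Cardinal.exists_ord_eq α
  set e := (Ordinal.typein r).toRelEmbedding
  obtain ⟨A, hA, hdom⟩ := hbound _ (Cardinal.ord_lt_ord.2 hα)
    (Function.extend e h fun _ _ => g (Classical.arbitrary J) _)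
  refine ⟨A, hA, fun a => ?_⟩
  have := hdom (e a) (hr ▸ Ordinal.typein_lt_type r a)
  rwa [(Ordinal.typein_injective r).extend_apply] at this

theorem exists_mem_forall_le_of_forall_dominated {ι J : Type 1} [PartialOrder J]
    {Ji : ι → Type 1} [∀ i, PartialOrder (Ji i)] {Istar : Set (Set ι)} {κ : Cardinal.{1}}
    (hIstar : IsIdeal Istar) (hIstarComp : IdealComplete Istar κ) {g : J → ∀ i, Ji i}
    (hmono : ∀ s t : J, s < t → prodLT Ji Istar (g s) (g t)) {X : Set ι} (hX : X ∉ Istar)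
    {β : Type 1} {s : Set β} (hs : #s < κ) {F : β → ∀ i, Ji i} {f : β → J} {t : J}
    (hF : ∀ b ∈ s, {i | i ∈ X ∧ ¬ F b i < g (f b) i} ∈ Istar) (hft : ∀ b ∈ s, f b ≤ t) :
    ∃ i ∈ X, ∀ b ∈ s, F b i ≤ g t i := by
  refine hIstarComp.exists_mem_forall hIstar hX hs fun b hb => ?_
  refine hIstar.mono _ (hIstar.union_mem _ (hF b hb) _ (prodLE_of_le hIstar hmono (hft b hb))) _ ?_
  rintro i ⟨hiX, hFt⟩
  by_contra h
  simp only [Set.mem_union, Set.mem_ofPred_eq, not_or, not_and, not_not] at h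
  exact hFt ((h.1 hiX).le.trans h.2)

theorem stmt8_general {ι : Type 1} {J : Type 1} [PartialOrder J]
    (Ji : ι → Type 1) [∀ i, PartialOrder (Ji i)]
    (S : Set Ordinal) (C : Ordinal → Set Ordinal)
    (I : Set (Set Ordinal)) (Istar : Set (Set ι)) (κ : Cardinal.{1})
    -- (a)
    (hOBB : OBBplus J S C I) (hI : IsIdealOn I S)
    (hCcard : ∀ δ ∈ S, #(C δ) < κ)
    -- (b)
    (hIcomp : IdealComplete I (Order.succ (2 ^ #ι)))
    -- (d)
    (hIstar : IsIdeal Istar)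
    (hIstarComp : IdealComplete Istar κ)
    -- (e)
    (g : J → ∀ i, Ji i)
    (hmono : ∀ s t : J, s < t → prodLT Ji Istar (g s) (g t))
    -- (f)
    (hbound : ∀ es < κ.ord, ∀ gs : Ordinal.{1} → ∀ i, Ji i,
      ∃ A : Set ι, A ∉ Istar ∧
        ∀ ε < es, ∃ t : J, {i | i ∈ A ∧ ¬ gs ε i < g t i} ∈ Istar) :
    {i | OBB (Ji i) S C I} ∉ Istar := by
  intro hB
  obtain ⟨t, ht⟩ := hOBB
  have : Nonempty J := ⟨t 0⟩
  have hF : ∀ i, ∃ F : Ordinal → Ji i, ¬ OBB (Ji i) S C I →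
      {δ ∈ S | ∀ α ∈ C δ, F α ≤ g (t δ) i} ∈ I := by
    intro i
    by_cases hi : OBB (Ji i) S C I
    · exact ⟨fun _ => g (t 0) i, absurd hi⟩
    · exact (not_OBB_iff.1 hi _).imp fun _ hF _ => hF
  choose F hF using hF
  have hA : ∀ δ ∈ S, ∃ A : Set ι, A ∉ Istar ∧
      ∀ α ∈ C δ, ∃ s : J, {i | i ∈ A ∧ ¬ F i α < g s i} ∈ Istar := fun δ hδ =>
    (exists_notMem_forall_exists_lt hbound (hCcard δ hδ) fun α i => F i α).imp
      fun _ hA => ⟨hA.1, fun α hα => hA.2 ⟨α, hα⟩⟩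
  choose! A hApos hAdom using hA
  obtain ⟨X, hX⟩ := hI.exists_fiber_notMem hIcomp (Cardinal.mk_set.trans_lt (Order.lt_succ _)) A
  have hAdomX : ∀ α ∈ ⋃ δ ∈ {δ ∈ S | A δ = X}, C δ,
      ∃ s : J, {i | i ∈ X ∧ ¬ F i α < g s i} ∈ Istar := by
    simp only [Set.mem_iUnion]
    rintro α ⟨δ, ⟨hδS, rfl⟩, hα⟩
    exact hAdom δ hδS α hα
  choose! f hf using hAdomX
  have hcover : {δ ∈ S | A δ = X} \ (S \ {δ ∈ S | ∀ α ∈ C δ, f α ≤ t δ}) ⊆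
      ⋃ i ∈ {i | OBB (Ji i) S C I}ᶜ, {δ ∈ S | ∀ α ∈ C δ, F i α ≤ g (t δ) i} := by
    rintro δ ⟨hδ, hδG⟩
    have hft : ∀ α ∈ C δ, f α ≤ t δ := by simpa [hδ.1] using hδG
    obtain ⟨i, ⟨-, hiB⟩, hiF⟩ := exists_mem_forall_le_of_forall_dominated hIstar hIstarComp hmono
      (hIstar.diff_notMem (hδ.2 ▸ hApos δ hδ.1) hB) (hCcard δ hδ.1) (F := fun α i => F i α)
      (fun α hα => hIstar.mono _ (hf α (Set.mem_biUnion hδ hα)) _ fun i hi => ⟨hi.1.1, hi.2⟩) hft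
    exact Set.mem_biUnion hiB ⟨hδ.1, hiF⟩
  refine hI.diff_notMem hX (ht f) (hI.mono _ (hIcomp.biUnion_mem_s8 (fun i hi => hF i hi) ?_) _ hcover)
  calc #({i | OBB (Ji i) S C I}ᶜ : Set ι) ≤ #ι := Cardinal.mk_set_le _
    _ < 2 ^ #ι := Cardinal.cantor _
    _ < Order.succ (2 ^ #ι) := Order.lt_succ _

/-- Assume (a) `OBB⁺_J(C̄, I)` and `κ` regular with `|C_δ| < κ`;
(b) `I` is `(2^{|i*|})⁺`-complete; (c) each `J_i` has no maximal element;
(d) `I*` is a `κ`-complete ideal on `i*`; (e) `s <_J t → g_s <_{I*} g_t`;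
(f) any `< κ` many product elements are, on some `I*`-positive set, individually
almost-dominated by members of `{g_t : t ∈ J}`.
Then `{i < i* : OBB_{J_i}(C̄, I)}` is `I*`-positive. -/
theorem stmt8 {ι : Type 1} {J : Type 1} [PartialOrder J]
    (Ji : ι → Type 1) [∀ i, PartialOrder (Ji i)]
    (S : Set Ordinal) (C : Ordinal → Set Ordinal)
    (I : Set (Set Ordinal)) (Istar : Set (Set ι)) (κ : Cardinal.{1})
    -- (a)
    (hOBB : OBBplus J S C I) (hI : IsIdealOn I S) (hC : ∀ δ ∈ S, C δ ⊆ Set.Iio δ)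
    (hκ : κ.IsRegular) (hCcard : ∀ δ ∈ S, #(C δ) < κ)
    -- (b)
    (hIcomp : IdealComplete I (Order.succ (2 ^ #ι)))
    -- (c)
    (hJi : ∀ i, ∀ s : Ji i, ∃ t : Ji i, s < t)
    -- (d)
    (hIstar : IsIdeal Istar)
    (hIstarComp : IdealComplete Istar κ)
    -- (e)
    (g : J → ∀ i, Ji i)
    (hmono : ∀ s t : J, s < t → prodLT Ji Istar (g s) (g t))
    -- (f)
    (hbound : ∀ es < κ.ord, ∀ gs : Ordinal.{1} → ∀ i, Ji i,
      ∃ A : Set ι, A ∉ Istar ∧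
        ∀ ε < es, ∃ t : J, {i | i ∈ A ∧ ¬ gs ε i < g t i} ∈ Istar) :
    {i | OBB (Ji i) S C I} ∉ Istar :=
  stmt8_general Ji S C I Istar κ hOBB hI hCcard hIcomp hIstar hIstarComp g hmono hbound
end

section
/- Let θ > σ be regular cardinals. Then cf(𝔡_{θ,σ}) ∉ [σ, θ]; that is, either cf(𝔡_{θ,σ}) < σ or cf(𝔡_{θ,σ}) > θ. -/
open Set Cardinal

universe u v

/-- `f` represents an element of `θ^θ`: on the domain `θ` its values are `< θ`. -/
def onDom (θ : Cardinal.{0}) (f : Ordinal → Ordinal) : Prop :=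
  ∀ ε < θ.ord, f ε < θ.ord

/-- `g` is a `(<σ)`-bound of `F ⊆ θ^θ`: for every subfamily `F'` of cardinality `< σ`,
the set of `ε < θ` where `g` dominates all of `F'` is unbounded in `θ`. -/
def IsBoundLT (θ σ : Cardinal.{0}) (F : Set (Ordinal → Ordinal)) (g : Ordinal → Ordinal) :
    Prop :=
  ∀ F' ⊆ F, #F' < Cardinal.lift.{1} σ →
    ∀ α < θ.ord, ∃ ε, α ≤ ε ∧ ε < θ.ord ∧ ∀ f ∈ F', f ε ≤ g ε

/-- `𝔡_{θ,σ}`: the least cardinality of a family `F ⊆ θ^θ` admitting no `(<σ)`-bound. -/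
noncomputable def dLT (θ σ : Cardinal.{0}) : Cardinal.{1} :=
  sInf {c | ∃ F : Set (Ordinal → Ordinal), (∀ f ∈ F, onDom θ f) ∧ #F = c ∧
    ¬ ∃ g, onDom θ g ∧ IsBoundLT θ σ F g}

/-!
Suppose `σ ≤ cf 𝔡 ≤ θ` for `𝔡 = 𝔡_{θ,σ}`. Enumerate an unbounded family `F` of size `𝔡` as
`⟨f_i : i < 𝔡⟩` and embed a cofinal `S ⊆ 𝔡` of size `cf 𝔡` into `θ` by `e`. Each initial segment
`{f_i : i < x}` with `x ∈ S` is smaller than `𝔡`, so it has a `(<σ)`-bound `g_x`, and by regularity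
of `θ` the diagonal supremum `h ε = sup {g_x ε : e x < ε}` stays below `θ`. A subfamily of `F` of
size `< σ ≤ cf 𝔡` lies in one initial segment `{f_i : i < x}`, and beyond `e x` the function `h`
dominates `g_x`; so `h` is a `(<σ)`-bound of `F`, a contradiction.
-/

section

variable {θ σ : Cardinal.{0}}

theorem not_isBoundLT_setOf_onDom (hθ : ℵ₀ ≤ θ) (hσ : 1 < σ) {g : Ordinal → Ordinal}
    (hg : onDom θ g) : ¬ IsBoundLT θ σ {f | onDom θ f} g := by
  intro hb
  have hlim := isSuccLimit_ord hθ
  have hsucc : onDom θ (g · + 1) := fun ε hε => hlim.add_one_lt (hg ε hε)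
  have hsingle : #({(g · + 1)} : Set (Ordinal → Ordinal)) < lift.{1} σ := by
    simpa using hσ
  obtain ⟨ε, -, -, hε⟩ := hb {(g · + 1)} (by simpa using hsucc) hsingle 0 hlim.bot_lt
  exact (lt_add_one (g ε)).not_ge (hε _ rfl)

theorem exists_unbounded_family_mk_eq_dLT (hθ : ℵ₀ ≤ θ) (hσ : 1 < σ) :
    ∃ F : Set (Ordinal → Ordinal), (∀ f ∈ F, onDom θ f) ∧ #F = dLT θ σ ∧
      ¬ ∃ g, onDom θ g ∧ IsBoundLT θ σ F g :=
  csInf_mem (s := {c | ∃ F : Set (Ordinal → Ordinal), (∀ f ∈ F, onDom θ f) ∧ #F = c ∧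
      ¬ ∃ g, onDom θ g ∧ IsBoundLT θ σ F g})
    ⟨_, {f | onDom θ f}, fun _ hf => hf, rfl,
      fun ⟨_, hg, hb⟩ => not_isBoundLT_setOf_onDom hθ hσ hg hb⟩

theorem exists_isBoundLT_of_mk_lt_dLT {F : Set (Ordinal → Ordinal)} (hF : ∀ f ∈ F, onDom θ f)
    (hFd : #F < dLT θ σ) : ∃ g, onDom θ g ∧ IsBoundLT θ σ F g := by
  by_contra h
  exact hFd.not_ge (csInf_le' ⟨F, hF, rfl, h⟩)

theorem IsBoundLT.mono {F G : Set (Ordinal → Ordinal)} {g : Ordinal → Ordinal} (hFG : F ⊆ G)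
    (hG : IsBoundLT θ σ G g) : IsBoundLT θ σ F g :=
  fun F' hF' => hG F' (hF'.trans hFG)

section diagSup

variable {ι : Type u} {e : ι → Ordinal.{0}} {g : ι → Ordinal → Ordinal}

variable (e g) in
noncomputable def diagSup (ε : Ordinal) : Ordinal :=
  sSup ((g · ε) '' {i | e i < ε})

theorem diagSup_lt (hθ : θ.IsRegular) (he : Function.Injective e) (hg : ∀ i, onDom θ (g i))
    {ε : Ordinal} (hε : ε < θ.ord) : diagSup e g ε < θ.ord := by
  refine Ordinal.sSup_lt_of_lt_cof ?_ (by rintro _ ⟨i, -, rfl⟩; exact hg i ε hε)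
  rw [← Ordinal.lift_cof, hθ.cof_ord, ← lift_lt.{_, u}]
  calc lift.{u} #((g · ε) '' {i | e i < ε}) ≤ lift.{1} #{i | e i < ε} := mk_image_le_lift
    _ ≤ lift.{u} #(Iio ε) := lift_mk_le_lift_mk_of_injective
          ((he.comp Subtype.val_injective).codRestrict fun i => i.2)
    _ < lift.{u} (lift.{1} θ) := by
      rw [mk_Iio_ordinal, lift_lt, lift_lt]
      exact lt_ord.1 hε

theorem onDom_diagSup (hθ : θ.IsRegular) (he : Function.Injective e) (hg : ∀ i, onDom θ (g i)) :
    onDom θ (diagSup e g) :=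
  fun _ => diagSup_lt hθ he hg

theorem le_diagSup (hg : ∀ i, onDom θ (g i)) {i : ι} {ε : Ordinal} (hi : e i < ε)
    (hε : ε < θ.ord) : g i ε ≤ diagSup e g ε :=
  le_csSup ⟨θ.ord, by rintro _ ⟨j, -, rfl⟩; exact (hg j ε hε).le⟩ ⟨i, hi, rfl⟩

theorem isBoundLT_diagSup (hθ : ℵ₀ ≤ θ) (heθ : ∀ i, e i < θ.ord)
    (hg : ∀ i, onDom θ (g i)) {F : Set (Ordinal → Ordinal)}
    (hF : ∀ F' ⊆ F, #F' < lift.{1} σ → ∃ i, IsBoundLT θ σ F' (g i)) :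
    IsBoundLT θ σ F (diagSup e g) := by
  intro F' hF' hF'σ α hα
  obtain ⟨i, hi⟩ := hF F' hF' hF'σ
  have hlim := isSuccLimit_ord hθ
  obtain ⟨ε, hαε, hε, hle⟩ :=
    hi F' subset_rfl hF'σ (max α (e i + 1)) (max_lt hα (hlim.add_one_lt (heθ i)))
  refine ⟨ε, le_of_max_le_left hαε, hε, fun f hf => (hle f hf).trans (le_diagSup hg ?_ hε)⟩
  exact Order.add_one_le_iff.1 (le_of_max_le_right hαε)

end diagSup

end

theorem IsCofinal.exists_subset_Iio_of_mk_lt_cof {α : Type*} [LinearOrder α] {S s : Set α}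
    (hS : IsCofinal S) (hs : #s < Order.cof α) : ∃ x ∈ S, s ⊆ Iio x := by
  obtain ⟨a, ha⟩ := not_isCofinal_iff.1 fun h => (Order.cof_le h).not_gt hs
  obtain ⟨x, hx, hax⟩ := hS a
  exact ⟨x, hx, fun b hb => (ha b hb).trans_le hax⟩

theorem stmt14_general (θ σ : Cardinal.{0})
    (hθ : θ.IsRegular) (hσ : σ.IsRegular) :
    ((dLT θ σ).ord).cof < Cardinal.lift.{1} σ ∨
      Cardinal.lift.{1} θ < ((dLT θ σ).ord).cof := by
  by_contra! ⟨hσd, hdθ⟩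
  obtain ⟨F, hFdom, hFd, hFnb⟩ :=
    exists_unbounded_family_mk_eq_dLT hθ.aleph0_le (one_lt_aleph0.trans_le hσ.aleph0_le)
  obtain ⟨φ⟩ : Nonempty ((dLT θ σ).ord.ToType ≃ F) := Cardinal.eq.1 (by rw [mk_ord_toType, hFd])
  obtain ⟨S, hS, hSd⟩ := Order.exists_cof_eq (dLT θ σ).ord.ToType
  rw [Ordinal.cof_toType] at hSd
  obtain ⟨e⟩ : Nonempty (S ↪ Iio θ.ord) := by
    rw [← le_def, mk_Iio_ordinal, card_ord, hSd]
    exact hdθ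
  have hbound (x : S) : ∃ g, onDom θ g ∧ IsBoundLT θ σ ((φ ·) '' Iio x.1) g :=
    exists_isBoundLT_of_mk_lt_dLT (by rintro _ ⟨y, -, rfl⟩; exact hFdom _ (φ y).2)
      (mk_image_le.trans_lt (by simpa using mk_Iio_lt x.1 (by simp)))
  have hcover (F' : Set (Ordinal → Ordinal)) (hF' : F' ⊆ F) (hF'σ : #F' < lift.{1} σ) :
      ∃ x : S, F' ⊆ (φ ·) '' Iio x.1 := by
    obtain ⟨x, hx, hsub⟩ :=
      hS.exists_subset_Iio_of_mk_lt_cof (s := (φ · : _ → Ordinal → Ordinal) ⁻¹' F') <| by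
        rw [Ordinal.cof_toType]
        exact (mk_preimage_of_injective _ _ (Subtype.val_injective.comp φ.injective)).trans_lt
          (hF'σ.trans_le hσd)
    exact ⟨⟨x, hx⟩, fun f hf => ⟨φ.symm ⟨f, hF' hf⟩, hsub (by simpa using hf), by simp⟩⟩
  choose g hgdom hgb using hbound
  exact hFnb ⟨diagSup (fun x => (e x : Ordinal)) g,
    onDom_diagSup hθ (Subtype.val_injective.comp e.injective) hgdom,
    isBoundLT_diagSup hθ.aleph0_le (fun x => (e x).2) hgdom fun F' hF' hF'σ =>
      (hcover F' hF' hF'σ).imp fun x hx => (hgb x).mono hx⟩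

/-- Let `θ > σ` be regular. Then `cf(𝔡_{θ,σ}) ∉ [σ, θ]`:
either `cf(𝔡_{θ,σ}) < σ` or `cf(𝔡_{θ,σ}) > θ`. -/
theorem stmt14 (θ σ : Cardinal.{0})
    (hθ : θ.IsRegular) (hσ : σ.IsRegular) (hσθ : σ < θ) :
    ((dLT θ σ).ord).cof < Cardinal.lift.{1} σ ∨
      Cardinal.lift.{1} θ < ((dLT θ σ).ord).cof :=
  stmt14_general θ σ hθ hσ
end
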